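/- The language L₂'' = { aⁿ bⁿ c²ⁿ : n ∈ ℕ, n ≥ 1 } over the alphabet {a,b,c} is CFL-immune; that is, L₂'' is infinite and no infinite subset of L₂'' is a context-free language. -/

import Mathlib

/-- `L` is CFL-immune: `L` is infinite and no infinite subset of `L` is context-free. -/
def CFLImmune {T : Type} (L : Language T) : Prop :=
  Set.Infinite (L : Set (List T)) ∧
    ∀ M : Language T, M ≤ L → Set.Infinite (M : Set (List T)) → ¬ M.IsContextFree

/-- L₂'' = { aⁿ bⁿ c²ⁿ : n ≥ 1 } over the three-letter alphabet {a,b,c} (as `Fin 3`). -/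
def L2'' : Language (Fin 3) :=
  {s | ∃ n : ℕ, 1 ≤ n ∧
    s = List.replicate n 0 ++ List.replicate n 1 ++ List.replicate (2 * n) 2}

/-!
Every word of `L2''` is sorted and has letter counts `#1 = #0` and `#2 = 2 · #0`. If a
context-free subset contains a long word, the pumping lemma decomposes it as `u x z y v` with
`x y ≠ []` and `u xʲ z yʲ v` in the subset for every `j`. Comparing the counts for `j = 0` and
`j = 1`, the factor `x y` has the same proportions of letters, so it contains all three letters;
but sortedness of `u x² z y² v` forces each of `x` and `y` to be a power of a single letter.

The pumping lemma is proved with derivations counted by their number of steps. If `A ⇒ⁿ w`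
and `w` is longer than `m ^ k`, where `m` bounds the right-hand sides and `k` counts the
nonterminals not yet met on the current path, then some nonterminal of the first right-hand side
derives a factor longer than `m ^ (k - 1)`; descending this way, a nonterminal `B` repeats,
giving `B ⇒⁺ x B y`. For a derivation of minimal length, `x y = []` would allow cutting out the
loop, so `x y ≠ []`.
-/

open List

namespace ContextFreeRule

variable {T N : Type*} {r : ContextFreeRule T N}

lemma Rewrites.exists_of_append :
    ∀ {s₁ s₂ v : List (Symbol T N)}, r.Rewrites (s₁ ++ s₂) v →
      (∃ s₁', r.Rewrites s₁ s₁' ∧ v = s₁' ++ s₂) ∨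
      (∃ s₂', r.Rewrites s₂ s₂' ∧ v = s₁ ++ s₂')
  | [], _, v, h => Or.inr ⟨v, h, rfl⟩
  | _ :: t, _, _, .head _ => Or.inl ⟨r.output ++ t, .head t, by simp⟩
  | a :: _, _, _, .cons _ h => by
    rcases exists_of_append h with ⟨s₁', h₁, rfl⟩ | ⟨s₂', h₂, rfl⟩
    · exact Or.inl ⟨a :: s₁', h₁.cons a, rfl⟩
    · exact Or.inr ⟨s₂', h₂, rfl⟩

end ContextFreeRule

namespace ContextFreeGrammar

variable {T : Type*} {g : ContextFreeGrammar T}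

inductive DerivesIn (g : ContextFreeGrammar T) :
    ℕ → List (Symbol T g.NT) → List (Symbol T g.NT) → Prop
  | refl (u : List (Symbol T g.NT)) : g.DerivesIn 0 u u
  | head {n : ℕ} {u v w : List (Symbol T g.NT)} :
      g.Produces u v → g.DerivesIn n v w → g.DerivesIn (n + 1) u w

namespace DerivesIn

variable {m n : ℕ} {u v w : List (Symbol T g.NT)}

lemma derives (h : g.DerivesIn n u v) : g.Derives u v := by
  induction h with
  | refl => exact .refl _
  | head huv _ ih => exact huv.trans_derives ih

lemma trans (h₁ : g.DerivesIn m u v) (h₂ : g.DerivesIn n v w) : g.DerivesIn (m + n) u w := by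
  induction h₁ with
  | refl => simpa using h₂
  | head huv _ ih => exact Nat.succ_add _ n ▸ .head huv (ih h₂)

lemma append_left (h : g.DerivesIn n u v) (p : List (Symbol T g.NT)) :
    g.DerivesIn n (p ++ u) (p ++ v) := by
  induction h with
  | refl => exact .refl _
  | head huv _ ih => exact .head (huv.append_left p) ih

lemma append_right (h : g.DerivesIn n u v) (p : List (Symbol T g.NT)) :
    g.DerivesIn n (u ++ p) (v ++ p) := by
  induction h with
  | refl => exact .refl _
  | head huv _ ih => exact .head (huv.append_right p) ih

lemma of_terminal {s w : List T}
    (h : g.DerivesIn n (s.map .terminal) (w.map .terminal)) : n = 0 ∧ s = w := by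
  generalize hw : w.map Symbol.terminal = w' at h
  cases h with
  | refl => exact ⟨rfl, map_injective_iff.2 (fun _ _ h => Symbol.terminal.inj h) hw.symm⟩
  | head huv _ => simpa using huv.exists_nonterminal_input_mem

lemma exists_of_append {s₁ s₂ : List (Symbol T g.NT)} {w : List T}
    (h : g.DerivesIn n (s₁ ++ s₂) (w.map .terminal)) :
    ∃ n₁ n₂ w₁ w₂, n₁ + n₂ = n ∧ w = w₁ ++ w₂ ∧
      g.DerivesIn n₁ s₁ (w₁.map .terminal) ∧ g.DerivesIn n₂ s₂ (w₂.map .terminal) := by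
  generalize hs : s₁ ++ s₂ = s at h
  generalize hw : w.map Symbol.terminal = w' at h
  induction h generalizing s₁ s₂ with
  | refl =>
    subst hw
    obtain ⟨w₁, w₂, rfl, rfl, rfl⟩ := map_eq_append_iff.1 hs.symm
    exact ⟨0, 0, w₁, w₂, rfl, rfl, .refl _, .refl _⟩
  | head huv _ ih =>
    obtain ⟨r, hr, hrw⟩ := huv
    subst hs
    rcases hrw.exists_of_append with ⟨s₁', h₁, rfl⟩ | ⟨s₂', h₂, rfl⟩
    · obtain ⟨n₁, n₂, w₁, w₂, rfl, rfl, d₁, d₂⟩ := ih rfl hw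
      exact ⟨n₁ + 1, n₂, w₁, w₂, by omega, rfl, .head ⟨r, hr, h₁⟩ d₁, d₂⟩
    · obtain ⟨n₁, n₂, w₁, w₂, rfl, rfl, d₁, d₂⟩ := ih rfl hw
      exact ⟨n₁, n₂ + 1, w₁, w₂, by omega, rfl, d₁, .head ⟨r, hr, h₂⟩ d₂⟩

lemma exists_rule_of_nonterminal {A : g.NT} {w : List T}
    (h : g.DerivesIn n [.nonterminal A] (w.map .terminal)) :
    ∃ r ∈ g.rules, r.input = A ∧
      ∃ m, n = m + 1 ∧ g.DerivesIn m r.output (w.map .terminal) := by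
  generalize hw : w.map Symbol.terminal = w' at h
  cases h with
  | refl => simpa using congrArg (Symbol.nonterminal A ∈ ·) hw
  | head huv h =>
    subst hw
    obtain ⟨r, hr, hrw⟩ := huv
    rcases hrw with _ | ⟨_, hrw⟩
    · exact ⟨r, hr, rfl, _, rfl, by simpa using h⟩
    · cases hrw

end DerivesIn

lemma derives_iff_exists_derivesIn {u v : List (Symbol T g.NT)} :
    g.Derives u v ↔ ∃ n, g.DerivesIn n u v := by
  refine ⟨fun h => ?_, fun ⟨_, h⟩ => h.derives⟩
  induction h using Relation.ReflTransGen.head_induction_on with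
  | refl => exact ⟨0, .refl _⟩
  | head huv _ ih => exact ⟨_, .head huv ih.choose_spec⟩

variable (g) in
def Frame (A B : g.NT) (n : ℕ) (u v : List T) : Prop :=
  g.DerivesIn n [.nonterminal A] (u.map .terminal ++ [.nonterminal B] ++ v.map .terminal)

namespace Frame

variable {A B C : g.NT} {a b c : ℕ} {u v x y : List T}

lemma refl (A : g.NT) : g.Frame A A 0 [] [] := DerivesIn.refl _

lemma trans (h₁ : g.Frame A B a u v) (h₂ : g.Frame B C b x y) :
    g.Frame A C (a + b) (u ++ x) (y ++ v) := by
  simpa [Frame] using DerivesIn.trans h₁ ((h₂.append_left _).append_right _)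

lemma fill {z : List T} (h₁ : g.Frame A B a u v)
    (h₂ : g.DerivesIn c [.nonterminal B] (z.map .terminal)) :
    g.DerivesIn (a + c) [.nonterminal A] ((u ++ z ++ v).map .terminal) := by
  simpa using DerivesIn.trans h₁ ((h₂.append_left _).append_right _)

lemma pow (h : g.Frame B B b x y) (j : ℕ) :
    g.Frame B B (j * b) (replicate j x).flatten (replicate j y).flatten := by
  induction j with
  | zero => simpa using refl B
  | succ j ih =>
    rw [replicate_succ, replicate_succ']
    simpa [add_mul, add_comm] using h.trans ih

end Frame

lemma DerivesIn.exists_long_factor {p : ℕ} (hp : 1 ≤ p) :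
    ∀ {s : List (Symbol T g.NT)} {n : ℕ} {w : List T},
    g.DerivesIn n s (w.map .terminal) → s.length * p < w.length →
    ∃ C x y z a c, w = x ++ z ++ y ∧ p < z.length ∧ a + c = n ∧
      g.DerivesIn a s (x.map .terminal ++ [.nonterminal C] ++ y.map .terminal) ∧
      g.DerivesIn c [.nonterminal C] (z.map .terminal)
  | [], _, w, h, hw => by
    obtain ⟨-, rfl⟩ := (DerivesIn.of_terminal (s := []) h)
    simp at hw
  | σ :: s, _, _, h, hw => by
    obtain ⟨n₁, n₂, w₁, w₂, rfl, rfl, d₁, d₂⟩ := h.exists_of_append (s₁ := [σ])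
    simp only [length_cons, length_append, add_mul, one_mul] at hw
    cases σ with
    | terminal t =>
      obtain ⟨rfl, rfl⟩ := DerivesIn.of_terminal (s := [t]) d₁
      obtain ⟨C, x, y, z, a, c, rfl, hz, rfl, dctx, dC⟩ :=
        exists_long_factor hp d₂ (by simp at hw; omega)
      exact ⟨C, t :: x, y, z, a, c, by simp, hz, by omega,
        by simpa using dctx.append_left [.terminal t], dC⟩
    | nonterminal D =>
      by_cases hw₁ : p < w₁.length
      · exact ⟨D, [], w₂, w₁, n₂, n₁, by simp, hw₁, by omega,
          by simpa using d₂.append_left [.nonterminal D], d₁⟩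
      · obtain ⟨C, x, y, z, a, c, rfl, hz, rfl, dctx, dC⟩ :=
          exists_long_factor hp d₂ (by omega)
        refine ⟨C, w₁ ++ x, y, z, n₁ + a, c, by simp, hz, by omega, ?_, dC⟩
        simpa using (d₁.append_right s).trans (dctx.append_left _)

variable (g) in
noncomputable def ruleInputs : Finset g.NT := by
  classical exact g.rules.image (·.input)

variable (g) in
def outputBound : ℕ := g.rules.sup (·.output.length) + 1

lemma length_output_le_outputBound {r : ContextFreeRule T g.NT} (hr : r ∈ g.rules) :
    r.output.length ≤ g.outputBound :=
  Nat.le_succ_of_le (Finset.le_sup (f := (·.output.length)) hr)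

variable (g) in
def DerivesInThrough (A B : g.NT) (n : ℕ) (w : List T) : Prop :=
  ∃ a c u v z, 0 < a ∧ a + c = n ∧ w = u ++ z ++ v ∧
    g.Frame A B a u v ∧ g.DerivesIn c [.nonterminal B] (z.map .terminal)

variable (g) in
def DerivesInPumpable (A : g.NT) (n : ℕ) (w : List T) : Prop :=
  ∃ B a c u v z, a + c = n ∧ w = u ++ z ++ v ∧ g.Frame A B a u v ∧ g.DerivesInThrough B B c z

section

variable {A B C : g.NT} {a c : ℕ} {x y z : List T}

lemma DerivesInThrough.frame (h₁ : g.Frame A C a x y) (h₂ : g.DerivesInThrough C B c z) :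
    g.DerivesInThrough A B (a + c) (x ++ z ++ y) := by
  obtain ⟨a', c', u, v, z', ha', rfl, rfl, hf, hd⟩ := h₂
  exact ⟨a + a', c', x ++ u, v ++ y, z', by omega, by omega, by simp, h₁.trans hf, hd⟩

lemma DerivesInPumpable.frame (h₁ : g.Frame A C a x y) (h₂ : g.DerivesInPumpable C c z) :
    g.DerivesInPumpable A (a + c) (x ++ z ++ y) := by
  obtain ⟨B, a', c', u, v, z', rfl, rfl, hf, hd⟩ := h₂
  exact ⟨B, a + a', c', x ++ u, v ++ y, z', by omega, by simp, h₁.trans hf, hd⟩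

lemma DerivesInThrough.pumpable (h : g.DerivesInThrough A A c z) : g.DerivesInPumpable A c z :=
  ⟨A, 0, c, [], [], z, by simp, by simp, Frame.refl A, h⟩

end

/-- `V` is the set of nonterminals met on the path from the root down to `A`. -/
lemma DerivesIn.pumpable_or_through [DecidableEq g.NT] {n : ℕ} {A : g.NT} {w : List T}
    {V : Finset g.NT} (hA : A ∉ V) (h : g.DerivesIn n [.nonterminal A] (w.map .terminal))
    (hw : g.outputBound ^ (g.ruleInputs \ V).card < w.length) :
    g.DerivesInPumpable A n w ∨ ∃ B ∈ V, g.DerivesInThrough A B n w := by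
  induction n using Nat.strong_induction_on generalizing A w V with
  | _ n ih =>
  obtain ⟨r, hr, rfl, n, rfl, hout⟩ := h.exists_rule_of_nonterminal
  have hAV : r.input ∈ g.ruleInputs \ V := by
    simpa [ruleInputs, hA] using ⟨r, hr, rfl⟩
  have hk : (g.ruleInputs \ V).card = (g.ruleInputs \ insert r.input V).card + 1 := by
    rw [Finset.sdiff_insert, Finset.card_erase_add_one hAV]
  set k := (g.ruleInputs \ insert r.input V).card
  rw [hk, pow_succ'] at hw
  have hlong : r.output.length * g.outputBound ^ k < w.length :=
    (Nat.mul_le_mul_right _ (length_output_le_outputBound hr)).trans_lt hw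
  obtain ⟨C, x, y, z, a, c, rfl, hz, rfl, hctx, hC⟩ :=
    hout.exists_long_factor (Nat.one_le_pow _ _ (Nat.succ_pos _)) hlong
  have hframe : g.Frame r.input C (a + 1) x y := .head ⟨r, hr, .input_output⟩ hctx
  have hthrough : g.DerivesInThrough r.input C (a + c + 1) (x ++ z ++ y) :=
    ⟨a + 1, c, x, y, z, by omega, by omega, rfl, hframe, hC⟩
  by_cases hCA : C = r.input
  · exact .inl (hCA ▸ hthrough).pumpable
  by_cases hCV : C ∈ V
  · exact .inr ⟨C, hCV, hthrough⟩
  have hCV' : C ∉ insert r.input V := by simp [hCA, hCV]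
  rcases ih c (by omega) hCV' hC hz with hpump | ⟨B, hB, hBthrough⟩
  · exact .inl (by simpa [add_right_comm] using hpump.frame hframe)
  · have hAB : g.DerivesInThrough r.input B (a + c + 1) (x ++ z ++ y) := by
      simpa [add_right_comm] using hBthrough.frame hframe
    rcases Finset.mem_insert.1 hB with rfl | hBV
    · exact .inl hAB.pumpable
    · exact .inr ⟨B, hBV, hAB⟩

lemma DerivesInPumpable.exists_pumping {S : g.NT} {n : ℕ} {w : List T}
    (h : g.DerivesInPumpable S n w)
    (hmin : ∀ m < n, ¬ g.DerivesIn m [.nonterminal S] (w.map .terminal)) :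
    ∃ u x z y v, w = u ++ x ++ z ++ y ++ v ∧ x ++ y ≠ [] ∧
      ∀ j, g.Derives [.nonterminal S]
        ((u ++ (replicate j x).flatten ++ z ++ (replicate j y).flatten ++ v).map .terminal) := by
  obtain ⟨B, a, _, u, v, _, rfl, rfl, hSB, b, c, x, y, z, hb, rfl, rfl, hBB, hB⟩ := h
  refine ⟨u, x, z, y, v, by simp, fun hxy => ?_, fun j => ?_⟩
  · obtain ⟨rfl, rfl⟩ := append_eq_nil_iff.1 hxy
    exact hmin (a + c) (by omega) (by simpa using hSB.fill hB)
  · simpa using (hSB.trans (hBB.pow j)).fill hB |>.derives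

end ContextFreeGrammar

open ContextFreeGrammar in
theorem Language.IsContextFree.exists_pumping {T : Type*} {L : Language T}
    (hL : L.IsContextFree) : ∃ p, ∀ w ∈ L, p < w.length →
      ∃ u x z y v, w = u ++ x ++ z ++ y ++ v ∧ x ++ y ≠ [] ∧
        ∀ j, u ++ (replicate j x).flatten ++ z ++ (replicate j y).flatten ++ v ∈ L := by
  classical
  obtain ⟨g, rfl⟩ := hL
  refine ⟨g.outputBound ^ g.ruleInputs.card, fun w hw hlen => ?_⟩
  have hex : ∃ n, g.DerivesIn n [.nonterminal g.initial] (w.map .terminal) :=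
    derives_iff_exists_derivesIn.1 hw
  rcases (Nat.find_spec hex).pumpable_or_through (Finset.notMem_empty _) (by simpa using hlen)
    with hpump | ⟨_, hB, _⟩
  · exact hpump.exists_pumping (fun m hm => Nat.find_min hex hm)
  · exact absurd hB (Finset.notMem_empty _)

lemma Set.Infinite.exists_length_gt {α : Type*} [Finite α] {S : Set (List α)} (hS : S.Infinite)
    (n : ℕ) : ∃ w ∈ S, n < w.length := by
  by_contra! h
  exact hS ((List.finite_length_le α n).subset h)

lemma List.card_toFinset_le_one_of_pairwise_append_self {α : Type*} [PartialOrder α]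
    [DecidableEq α] {x : List α} (h : (x ++ x).Pairwise (· ≤ ·)) : x.toFinset.card ≤ 1 := by
  have hle := (pairwise_append.1 h).2.2
  exact Finset.card_le_one.2 fun a ha b hb =>
    le_antisymm (hle a (mem_toFinset.1 ha) b (mem_toFinset.1 hb))
      (hle b (mem_toFinset.1 hb) a (mem_toFinset.1 ha))

lemma infinite_L2'' : (L2'' : Set (List (Fin 3))).Infinite :=
  Set.infinite_of_injective_forall_mem
    (f := fun n => replicate (n + 1) 0 ++ replicate (n + 1) 1 ++ replicate (2 * (n + 1)) 2)
    (fun m n hmn => by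
      have hlen := congrArg length hmn
      simp only [length_append, length_replicate] at hlen
      omega)
    fun n => ⟨n + 1, by omega, rfl⟩

lemma count_of_mem_L2'' {s : List (Fin 3)} (hs : s ∈ L2'') :
    s.count 1 = s.count 0 ∧ s.count 2 = 2 * s.count 0 := by
  obtain ⟨n, -, rfl⟩ := hs
  simp [count_replicate]

lemma pairwise_of_mem_L2'' {s : List (Fin 3)} (hs : s ∈ L2'') : s.Pairwise (· ≤ ·) := by
  obtain ⟨n, -, rfl⟩ := hs
  simp [pairwise_append, pairwise_replicate, mem_replicate]

lemma eq_nil_of_forall_pump_mem_L2'' {u x z y v : List (Fin 3)}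
    (h : ∀ j, u ++ (replicate j x).flatten ++ z ++ (replicate j y).flatten ++ v ∈ L2'') :
    x ++ y = [] := by
  have hcount (j : ℕ) (d : Fin 3) :
      (u ++ (replicate j x).flatten ++ z ++ (replicate j y).flatten ++ v).count d =
        (u ++ z ++ v).count d + j * (x ++ y).count d := by
    simp only [count_append, count_flatten, map_replicate, sum_replicate, smul_eq_mul]
    ring
  obtain ⟨h₀₁, h₀₂⟩ := count_of_mem_L2'' (h 0)
  obtain ⟨h₁₁, h₁₂⟩ := count_of_mem_L2'' (h 1)
  simp only [hcount] at h₀₁ h₀₂ h₁₁ h₁₂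
  have h₁ : (x ++ y).count 1 = (x ++ y).count 0 := by omega
  have h₂ : (x ++ y).count 2 = 2 * (x ++ y).count 0 := by omega
  by_contra hne
  obtain ⟨d, hd⟩ := exists_mem_of_ne_nil _ hne
  have hcases : ∀ d : Fin 3, d = 0 ∨ d = 1 ∨ d = 2 := by decide
  have hpos : 0 < (x ++ y).count 0 := by
    have := count_pos_iff.2 hd
    rcases hcases d with rfl | rfl | rfl <;> omega
  have hall (e : Fin 3) : e ∈ x ++ y := by
    rw [← count_pos_iff]
    rcases hcases e with rfl | rfl | rfl <;> omega
  have hsorted := pairwise_of_mem_L2'' (h 2)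
  have hx : x.toFinset.card ≤ 1 := card_toFinset_le_one_of_pairwise_append_self
    (hsorted.sublist (IsInfix.sublist ⟨u, z ++ y ++ y ++ v, by simp⟩))
  have hy : y.toFinset.card ≤ 1 := card_toFinset_le_one_of_pairwise_append_self
    (hsorted.sublist (IsInfix.sublist ⟨u ++ x ++ x ++ z, v, by simp⟩))
  have h3 : Finset.univ.card ≤ (x.toFinset ∪ y.toFinset).card :=
    Finset.card_le_card fun e _ => by simpa [← toFinset_append] using hall e
  have := Finset.card_union_le x.toFinset y.toFinset
  simp only [Finset.card_univ, Fintype.card_fin] at h3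
  omega

/-- L₂'' is CFL-immune. -/
theorem L2''_CFLImmune : CFLImmune L2'' := by
  refine ⟨infinite_L2'', fun M hML hM hcf => ?_⟩
  obtain ⟨p, hp⟩ := hcf.exists_pumping
  obtain ⟨w, hwM, hw⟩ := hM.exists_length_gt p
  obtain ⟨u, x, z, y, v, -, hxy, hpump⟩ := hp w hwM hw
  exact hxy (eq_nil_of_forall_pump_mem_L2'' fun j => hML (hpump j))
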